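/- Let P = (K, V, q, θ, t ↦ [t], ·) be a polarity algebra. Then (u·v)·(v·w) = ((u·(v·w))·v for all u, v, w ∈ V. -/

import Mathlib

/-!
Linearizing (R5), `(u·v)·v = q(v)^θ u`, in `v` gives
`(u·v)·w + (u·w)·v = f(v,w)^θ u + [f(v·u, w) f(v,w)]`: the other bracket terms cancel in pairs
by (R6) and the symmetry `f(a·x, b) = f(b·x, a)` read off from (R7). For `w := v·w`, which is
`f`-orthogonal to `v` by (R7), the right side vanishes, and in characteristic 2 the sum of the two
products vanishing means they are equal.
-/

open QuadraticMap

/-- A polarity algebra (De Medts–Segev–Weiss): a field `K` of characteristic 2, an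
anisotropic quadratic space `(K, V, q)` whose polar form `f = ∂q` is not identically
zero, a Tits endomorphism `θ` of `K`, a `K`-linear embedding `t ↦ [t]` of the twisted
vector space `[K^θ]` (with scalar action `a • [t] = [a^θ t]`) into the radical of `f`,
and a multiplication on `V` satisfying the axioms (R1)–(R7). -/
structure PolarityAlgebra (K V : Type*) [Field K] [CharP K 2]
    [AddCommGroup V] [Module K V] where
  q : QuadraticForm K V
  anisotropic : q.Anisotropic
  f_ne_zero : ∃ u v : V, polar q u v ≠ 0
  θ : K →+* K
  tits : ∀ t : K, θ (θ t) = t ^ 2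
  br : K → V
  br_add : ∀ s t : K, br (s + t) = br s + br t
  br_smul : ∀ a t : K, a • br t = br (θ a * t)
  br_inj : Function.Injective br
  br_rad : ∀ (t : K) (v : V), polar q (br t) v = 0
  mul : V → V → V
  R1 : ∀ v : V, IsLinearMap K fun x => mul x v
  R2 : ∀ (t : K) (v : V), mul v (br t) = t • v
  R3 : ∀ (t : K) (u v : V), mul u (t • v) = θ t • mul u v
  R4 : ∀ (t : K) (v : V), mul (br t) v = br (t * q v)
  R5 : ∀ u v : V, mul (mul u v) v = θ (q v) • u
  R6 : ∀ u v : V, mul v (mul u v) = q v • mul v u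
  R7 : ∀ u v w : V, mul u (v + w) = mul u v + mul u w + br (polar q (mul v u) w)

variable {K V : Type*} [Field K] [CharP K 2] [AddCommGroup V] [Module K V]

namespace PolarityAlgebra

variable (P : PolarityAlgebra K V)

theorem br_zero : P.br 0 = 0 := by
  simpa using P.br_add 0 0

theorem mul_zero (x : V) : P.mul x 0 = 0 := by
  simpa using P.R3 0 x 0

theorem add_mul (x y v : V) : P.mul (x + y) v = P.mul x v + P.mul y v :=
  (P.R1 v).map_add x y

theorem polar_mul_comm (a b x : V) :
    polar P.q (P.mul a x) b = polar P.q (P.mul b x) a := by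
  apply P.br_inj
  have h := P.R7 x a b
  rw [add_comm a b, P.R7 x b a, add_comm (P.mul x b)] at h
  exact (add_left_cancel h).symm

theorem polar_self_mul (v w : V) : polar P.q v (P.mul v w) = 0 := by
  have h := P.R7 w v v
  simp only [← two_smul K, CharTwo.two_eq_zero, zero_smul, P.mul_zero, zero_add] at h
  rw [polar_comm]
  exact P.br_inj (h.symm.trans P.br_zero.symm)

theorem polar_mul_mul_self (u v w : V) :
    polar P.q (P.mul v (P.mul u w)) w = P.q w * polar P.q (P.mul v u) w := by
  rw [P.polar_mul_comm, P.R6, polar_smul_left, smul_eq_mul, P.polar_mul_comm w v]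

theorem mul_mul_add_mul_mul (u v w : V) :
    P.mul (P.mul u v) w + P.mul (P.mul u w) v
      = P.θ (polar P.q v w) • u + P.br (polar P.q (P.mul v u) w * polar P.q v w) := by
  have h := P.R5 u (v + w)
  rw [P.R7 u v w, P.add_mul, P.add_mul, P.R7 _ v w, P.R7 _ v w, P.R5, P.R5, P.R6,
    polar_smul_left, P.polar_mul_mul_self, P.R4, QuadraticMap.map_add P.q v w, map_add, map_add,
    add_smul, add_smul] at h
  set t := polar P.q (P.mul v u) w
  have hbr : P.br (P.q v • t) + P.br (P.q w * t) + P.br (t * (P.q v + P.q w + polar P.q v w))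
      = P.br (t * polar P.q v w) := by
    rw [← P.br_add, ← P.br_add]
    congr 1
    linear_combination (P.q v * t + P.q w * t) * CharTwo.two_eq_zero (R := K)
  linear_combination (norm := module)
    h - hbr - CharTwo.two_eq_zero (R := K) • P.br (t * polar P.q v w)

end PolarityAlgebra

/-- In a polarity algebra, `(u·v)·(v·w) = (u·(v·w))·v`. -/
theorem polarityAlgebra_assoc_identity (P : PolarityAlgebra K V) (u v w : V) :
    P.mul (P.mul u v) (P.mul v w) = P.mul (P.mul u (P.mul v w)) v := by
  have h := P.mul_mul_add_mul_mul u v (P.mul v w)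
  rw [P.polar_self_mul, map_zero, zero_smul, mul_zero, P.br_zero, add_zero] at h
  linear_combination (norm := module)
    h - CharTwo.two_eq_zero (R := K) • P.mul (P.mul u (P.mul v w)) v
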